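/- arXiv:2405.18568 — 6 statements merged into one kernel-verified Lean document; each statement's English description precedes it below -/
import Mathlib

section
/- Let h be valid heights for a cut-saturating pseudo-flow f on a network G with n vertices, where h(s)=n and h(t)=0. Let θ be the smallest positive integer not appearing in the set of heights {h(u) : u ∈ V}, and define S = {u : h(u) > θ} and T = {u : h(u) < θ}. Then (S,T) is a partition of V with s ∈ S, t ∈ T, and f saturates the cut δ(S,T). -/
open Finset

/-- A flow network on vertex set `V`: integral capacities, a source `s` and a sink `t`. -/
structure Network (V : Type) where
  c : V → V → ℤ
  s : V
  t : V
  st_ne : s ≠ t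
  cap_nonneg : ∀ u v, 0 ≤ c u v

variable {V : Type} [Fintype V] [DecidableEq V]

/-- A pseudo-flow: capacity constraints only. -/
def IsPseudoflow (N : Network V) (f : V → V → ℤ) : Prop :=
  ∀ u v, 0 ≤ f u v ∧ f u v ≤ N.c u v

def inflow (f : V → V → ℤ) (u : V) : ℤ := ∑ v, f v u
def outflow (f : V → V → ℤ) (u : V) : ℤ := ∑ v, f u v
def netFlow (f : V → V → ℤ) (u : V) : ℤ := inflow f u - outflow f u
def exc (f : V → V → ℤ) (u : V) : ℤ := max (netFlow f u) 0
def deficit (f : V → V → ℤ) (u : V) : ℤ := max (- netFlow f u) 0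

/-- A pre-flow: pseudo-flow with nonnegative excess at every non-terminal vertex. -/
def IsPreflow (N : Network V) (f : V → V → ℤ) : Prop :=
  IsPseudoflow N f ∧ ∀ u, u ≠ N.s → u ≠ N.t → 0 ≤ netFlow f u

/-- A feasible flow: pseudo-flow satisfying conservation at non-terminals. -/
def IsFlow (N : Network V) (f : V → V → ℤ) : Prop :=
  IsPseudoflow N f ∧ ∀ u, u ≠ N.s → u ≠ N.t → netFlow f u = 0

/-- Value of a flow: net flow out of the source. -/
def flowValue (N : Network V) (f : V → V → ℤ) : ℤ := outflow f N.s - inflow f N.s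

/-- Residual edge `(u,v)`: either the forward edge `(u,v)` is unsaturated, or the
backward edge of `(v,u)` carries positive flow. -/
def ResEdge (N : Network V) (f : V → V → ℤ) (u v : V) : Prop :=
  f u v < N.c u v ∨ 0 < f v u

/-- Reachability in the residual graph. -/
def ResReach (N : Network V) (f : V → V → ℤ) : V → V → Prop :=
  Relation.ReflTransGen (ResEdge N f)

/-- Edge of the underlying network. -/
def GEdge (N : Network V) (u v : V) : Prop := 0 < N.c u v

/-- `f` saturates the cut `δ(S,T)`: every edge from `S` to `T` is at capacity and
every edge from `T` to `S` carries zero flow. -/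
def SaturatesCut (N : Network V) (f : V → V → ℤ) (S T : Finset V) : Prop :=
  ∀ u ∈ S, ∀ v ∈ T, f u v = N.c u v ∧ f v u = 0

/-- `(S,T)` is an s–t cut partition of the vertices. -/
def IsCutPartition (N : Network V) (S T : Finset V) : Prop :=
  S ∪ T = Finset.univ ∧ Disjoint S T ∧ N.s ∈ S ∧ N.t ∈ T

/-- Capacity of the cut `δ(S,T)`. -/
def cutCap (N : Network V) (S T : Finset V) : ℤ := ∑ u ∈ S, ∑ v ∈ T, N.c u v

/-- Valid heights for Push-Relabel: `h s = n`, `h t = 0`, and `h u ≤ h v + 1`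
for every residual edge `(u,v)`. -/
def ValidHeights (N : Network V) (f : V → V → ℤ) (h : V → ℕ) : Prop :=
  h N.s = Fintype.card V ∧ h N.t = 0 ∧ ∀ u v, ResEdge N f u v → h u ≤ h v + 1

/-- for valid heights of a cut-saturating pseudo-flow, with `θ` the
smallest positive integer missing from the heights, `S = {h > θ}` and `T = {h < θ}`
form an s–t cut partition saturated by `f`. -/
theorem stmt4 (N : Network V) (f : V → V → ℤ) (h : V → ℕ)
    (hpf : IsPseudoflow N f) (hvalid : ValidHeights N f h)
    (hcutsat : ∃ S₀ T₀ : Finset V, IsCutPartition N S₀ T₀ ∧ SaturatesCut N f S₀ T₀)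
    (θ : ℕ) (hθpos : 0 < θ) (hθnot : ∀ u : V, h u ≠ θ)
    (hθmin : ∀ z : ℕ, 0 < z → (∀ u : V, h u ≠ z) → θ ≤ z) :
    IsCutPartition N (Finset.univ.filter fun u => θ < h u)
        (Finset.univ.filter fun u => h u < θ) ∧
    SaturatesCut N f (Finset.univ.filter fun u => θ < h u)
        (Finset.univ.filter fun u => h u < θ) := by
  obtain ⟨hs, ht, hres⟩ := hvalid
  set n := Fintype.card V with hn
  have himg : ∃ z, z ∈ Finset.Icc 0 n ∧ z ∉ Finset.image h Finset.univ := by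
    by_contra hc
    push_neg at hc
    have h1 := Finset.card_le_card hc
    have h2 : (Finset.image h Finset.univ).card ≤ n :=
      le_trans Finset.card_image_le (le_of_eq rfl)
    simp [Nat.card_Icc] at h1
    omega
  obtain ⟨z, hz1, hz2⟩ := himg
  simp only [Finset.mem_Icc, Finset.mem_image, Finset.mem_univ, true_and, not_exists] at hz1 hz2
  have hz0 : z ≠ 0 := fun h0 => hz2 N.t (by rw [ht, h0])
  have hzn : z ≠ n := fun h0 => hz2 N.s (by rw [hs, h0])
  have hθn : θ < n :=
    lt_of_le_of_lt (hθmin z (Nat.pos_of_ne_zero hz0) hz2) (lt_of_le_of_ne hz1.2 hzn)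
  constructor
  · refine ⟨?_, ?_, ?_, ?_⟩
    · ext u
      simp only [Finset.mem_union, Finset.mem_filter, Finset.mem_univ, true_and, iff_true]
      have := hθnot u; omega
    · rw [Finset.disjoint_left]
      intro a ha hb
      simp only [Finset.mem_filter] at ha hb
      omega
    · simp only [Finset.mem_filter, Finset.mem_univ, true_and, hs]
      exact hθn
    · simp only [Finset.mem_filter, Finset.mem_univ, true_and, ht]
      exact hθpos
  · intro u hu v hv
    simp only [Finset.mem_filter, Finset.mem_univ, true_and] at hu hv
    have hnr : ¬ ResEdge N f u v := fun hr => by have := hres u v hr; omega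
    unfold ResEdge at hnr
    push_neg at hnr
    have h1 := hpf u v
    have h2 := hpf v u
    constructor <;> omega
end

section
/- Let f be a pre-flow on network G saturating a cut δ(S,T) with s ∈ S and t ∈ T. If no vertex of T has positive excess, then δ(S,T) is a minimum s–t cut of G. -/
open Finset

variable {V : Type} [Fintype V] [DecidableEq V]

lemma sum_netFlow (f : V → V → ℤ) (A B : Finset V)
    (hU : A ∪ B = Finset.univ) (hd : Disjoint A B) :
    ∑ u ∈ B, netFlow f u = ∑ a ∈ A, ∑ b ∈ B, f a b - ∑ b ∈ B, ∑ a ∈ A, f b a := by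
  have h1 : ∀ u, inflow f u = ∑ v ∈ A, f v u + ∑ v ∈ B, f v u := by
    intro u; rw [inflow, ← hU, Finset.sum_union hd]
  have h2 : ∀ u, outflow f u = ∑ v ∈ A, f u v + ∑ v ∈ B, f u v := by
    intro u; rw [outflow, ← hU, Finset.sum_union hd]
  simp only [netFlow, h1, h2]
  rw [Finset.sum_sub_distrib, Finset.sum_add_distrib, Finset.sum_add_distrib]
  have c1 : ∑ u ∈ B, ∑ v ∈ B, f v u = ∑ u ∈ B, ∑ v ∈ B, f u v := Finset.sum_comm
  have c2 : ∑ u ∈ B, ∑ v ∈ A, f v u = ∑ a ∈ A, ∑ b ∈ B, f a b := Finset.sum_comm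
  rw [c1, c2]; ring

/-- if a pre-flow saturates the cut `δ(S,T)` and no non-terminal
vertex of `T` has positive excess, then `δ(S,T)` is a minimum s–t cut. -/
theorem stmt6 (N : Network V) (f : V → V → ℤ) (S T : Finset V)
    (hpre : IsPreflow N f) (hpart : IsCutPartition N S T)
    (hsat : SaturatesCut N f S T)
    (hexc : ∀ u ∈ T, u ≠ N.t → exc f u = 0) :
    ∀ S' T' : Finset V, IsCutPartition N S' T' → cutCap N S T ≤ cutCap N S' T' := by
  obtain ⟨hU, hd, hs, ht⟩ := hpart
  obtain ⟨hpf, hnn⟩ := hpre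
  -- netFlow is zero on T \ {t}
  have hzero : ∀ u ∈ T, u ≠ N.t → netFlow f u = 0 := by
    intro u hu hut
    have hus : u ≠ N.s := by
      rintro rfl; exact (Finset.disjoint_left.mp hd hs) hu
    have h1 := hnn u hus hut
    have h2 := hexc u hu hut
    simp only [exc, max_eq_right_iff] at h2
    omega
  -- split off t from a sum over a set containing t
  have key : cutCap N S T = netFlow f N.t := by
    have e1 := sum_netFlow f S T hU hd
    have e2 : ∑ a ∈ S, ∑ b ∈ T, f a b = cutCap N S T := by
      unfold cutCap
      exact Finset.sum_congr rfl fun a ha => Finset.sum_congr rfl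
        fun b hb => (hsat a ha b hb).1
    have e3 : ∑ b ∈ T, ∑ a ∈ S, f b a = 0 := by
      apply Finset.sum_eq_zero; intro b hb
      exact Finset.sum_eq_zero fun a ha => (hsat a ha b hb).2
    have e4 : ∑ u ∈ T, netFlow f u = netFlow f N.t := by
      rw [← Finset.add_sum_erase T _ ht]
      have : ∑ u ∈ T.erase N.t, netFlow f u = 0 :=
        Finset.sum_eq_zero fun u hu =>
          hzero u (Finset.mem_of_mem_erase hu) (Finset.ne_of_mem_erase hu)
      omega
    rw [e2, e3] at e1; omega
  intro S' T' hpart'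
  obtain ⟨hU', hd', hs', ht'⟩ := hpart'
  have e1 := sum_netFlow f S' T' hU' hd'
  have e4 : netFlow f N.t ≤ ∑ u ∈ T', netFlow f u := by
    rw [← Finset.add_sum_erase T' _ ht']
    have : 0 ≤ ∑ u ∈ T'.erase N.t, netFlow f u := by
      apply Finset.sum_nonneg; intro u hu
      have hut := Finset.ne_of_mem_erase hu
      have hus : u ≠ N.s := by
        rintro rfl
        exact (Finset.disjoint_left.mp hd' hs') (Finset.mem_of_mem_erase hu)
      exact hnn u hus hut
    omega
  have e5 : ∑ a ∈ S', ∑ b ∈ T', f a b ≤ cutCap N S' T' := by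
    apply Finset.sum_le_sum; intro a _
    exact Finset.sum_le_sum fun b _ => (hpf a b).2
  have e6 : 0 ≤ ∑ b ∈ T', ∑ a ∈ S', f b a := by
    apply Finset.sum_nonneg; intro b _
    exact Finset.sum_nonneg fun a _ => (hpf b a).1
  omega
end

section
/- Let f be a cut-saturating pseudo-flow on network G saturating the cut δ(S,T) with s ∈ S, t ∈ T. If no vertex in T has positive excess and no vertex in S has positive deficit, then δ(S,T) is a minimum s–t cut, and moreover f can be augmented to a feasible maximum flow saturating the same cut by routing excess in S back to s within S and routing flow from t to deficits within T. -/
/-!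
With `T = Sᶜ`, saturation of `δ(S, T)` means that no residual edge leaves `S` or enters `T`.
A vertex `u ∈ S` with positive excess reaches some vertex with positive deficit in the residual
graph; that vertex lies in `S`, so it is `s`, and one unit can be pushed from `u` back to `s`
along a walk inside `S`. Mirror-wise (in the reversed network), `t` reaches every deficit
vertex of `T` inside `T`. Such pushes keep the cut saturated and the hypotheses intact while
lowering `∑_{u ≠ s, t} |netFlow u|`, so they end in a flow `g` saturating `δ(S, T)`. Its value
is then the capacity of the cut, and weak duality makes `g` maximum and the cut minimum.
-/

open Finset

variable {V : Type} [Fintype V] [DecidableEq V]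

set_option linter.unusedSectionVars false

namespace Relation.ReflTransGen

variable {α : Type*} {r : α → α → Prop} {a b : α}

theorem restrict {p : α → Prop} (hp : ∀ x y, p x → r x y → p y) (ha : p a)
    (h : ReflTransGen r a b) : p b ∧ ReflTransGen (fun x y => r x y ∧ p x ∧ p y) a b := by
  induction h with
  | refl => exact ⟨ha, .refl⟩
  | tail _ hbc ih => exact ⟨hp _ _ ih.1 hbc, ih.2.tail ⟨hbc, ih.1, hp _ _ ih.1 hbc⟩⟩

theorem exists_step_avoiding (h : ReflTransGen r a b) (hab : a ≠ b) :
    ∃ c, c ≠ a ∧ r a c ∧ ReflTransGen (fun x y => r x y ∧ x ≠ a ∧ y ≠ a) c b := by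
  induction h with
  | refl => exact absurd rfl hab
  | @tail d b _ hdb ih =>
    by_cases hda : d = a
    · subst hda
      exact ⟨b, Ne.symm hab, hdb, .refl⟩
    · obtain ⟨c, hca, hac, hcd⟩ := ih (Ne.symm hda)
      exact ⟨c, hca, hac, hcd.tail ⟨hdb, hda, Ne.symm hab⟩⟩

end Relation.ReflTransGen

open Relation

section Flows

variable {N : Network V} {f g : V → V → ℤ}

theorem netFlow_add (f g : V → V → ℤ) : netFlow (f + g) = netFlow f + netFlow g := by
  ext u
  simp only [netFlow, inflow, outflow, Pi.add_apply, Finset.sum_add_distrib]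
  ring

theorem netFlow_sub (f g : V → V → ℤ) : netFlow (f - g) = netFlow f - netFlow g := by
  ext u
  simp only [netFlow, inflow, outflow, Pi.sub_apply, Finset.sum_sub_distrib]
  ring

def edgeUnit (a b : V) : V → V → ℤ := fun p q => if p = a ∧ q = b then 1 else 0

theorem netFlow_edgeUnit (a b : V) :
    netFlow (edgeUnit a b) = Pi.single b 1 - Pi.single a 1 := by
  ext u
  have hin : inflow (edgeUnit a b) u = (Pi.single b 1 : V → ℤ) u := by
    rcases eq_or_ne u b with rfl | hub <;> simp [inflow, edgeUnit, *]
  have hout : outflow (edgeUnit a b) u = (Pi.single a 1 : V → ℤ) u := by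
    rcases eq_or_ne u a with rfl | hua <;> simp [outflow, edgeUnit, *]
  rw [netFlow, hin, hout, Pi.sub_apply]

theorem exists_push_of_resEdge (hf : IsPseudoflow N f) {a b : V} (h : ResEdge N f a b) :
    ∃ f', IsPseudoflow N f' ∧ (∀ p q, f' p q ≠ f p q → p = a ∧ q = b ∨ p = b ∧ q = a) ∧
      netFlow f' = netFlow f - Pi.single a 1 + Pi.single b 1 := by
  rcases h with h | h
  · refine ⟨f + edgeUnit a b, fun p q => ?_, fun p q hpq => ?_, ?_⟩
    · have := hf p q
      simp only [Pi.add_apply, edgeUnit]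
      split_ifs with hpq
      · obtain ⟨rfl, rfl⟩ := hpq
        omega
      · simpa using this
    · left
      by_contra hne
      simp [edgeUnit, hne] at hpq
    · rw [netFlow_add, netFlow_edgeUnit]
      abel
  · refine ⟨f - edgeUnit b a, fun p q => ?_, fun p q hpq => ?_, ?_⟩
    · have := hf p q
      simp only [Pi.sub_apply, edgeUnit]
      split_ifs with hpq
      · obtain ⟨rfl, rfl⟩ := hpq
        omega
      · simpa using this
    · right
      by_contra hne
      simp [edgeUnit, hne] at hpq
    · rw [netFlow_sub, netFlow_edgeUnit]
      abel

theorem exists_push_of_reflTransGen (A : Finset V) {a b : V} (hf : IsPseudoflow N f)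
    (h : ReflTransGen (fun x y => ResEdge N f x y ∧ x ∈ A ∧ y ∈ A) a b) :
    ∃ f', IsPseudoflow N f' ∧ (∀ p q, f' p q ≠ f p q → p ∈ A ∧ q ∈ A) ∧
      netFlow f' = netFlow f - Pi.single a 1 + Pi.single b 1 := by
  induction A using Finset.strongInduction generalizing f a with
  | H A ih =>
  rcases eq_or_ne a b with rfl | hab
  · exact ⟨f, hf, fun p q h => absurd rfl h, by abel⟩
  -- a walk that never returns to `a` stays residual after pushing on its first edge
  obtain ⟨c, hca, ⟨hac, haA, hcA⟩, hcb⟩ := h.exists_step_avoiding hab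
  obtain ⟨f₁, hf₁, hf₁f, hnet₁⟩ := exists_push_of_resEdge hf hac
  have hf₁_eq : ∀ x y, x ≠ a → y ≠ a → f₁ x y = f x y := fun x y hx hy => by
    by_contra hne
    rcases hf₁f x y hne with ⟨rfl, -⟩ | ⟨-, rfl⟩ <;> contradiction
  have hcb₁ :
      ReflTransGen (fun x y => ResEdge N f₁ x y ∧ x ∈ A.erase a ∧ y ∈ A.erase a) c b :=
    ReflTransGen.mono (fun x y ⟨⟨hxy, hxA, hyA⟩, hxa, hya⟩ =>
      ⟨by rwa [ResEdge, hf₁_eq x y hxa hya, hf₁_eq y x hya hxa],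
        Finset.mem_erase.2 ⟨hxa, hxA⟩, Finset.mem_erase.2 ⟨hya, hyA⟩⟩) _ _ hcb
  obtain ⟨f₂, hf₂, hf₂f₁, hnet₂⟩ := ih _ (Finset.erase_ssubset haA) hf₁ hcb₁
  refine ⟨f₂, hf₂, fun p q hpq => ?_, by rw [hnet₂, hnet₁]; abel⟩
  by_cases h₁ : f₂ p q = f₁ p q
  · rcases hf₁f p q (h₁ ▸ hpq) with ⟨rfl, rfl⟩ | ⟨rfl, rfl⟩
    exacts [⟨haA, hcA⟩, ⟨hcA, haA⟩]
  · exact (hf₂f₁ p q h₁).imp Finset.mem_of_mem_erase Finset.mem_of_mem_erase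

theorem sum_netFlow_eq_sum_compl (f : V → V → ℤ) (R : Finset V) :
    ∑ u ∈ R, netFlow f u = ∑ u ∈ R, ∑ v ∈ Rᶜ, (f v u - f u v) := by
  have hsplit : ∀ u, netFlow f u = ∑ v ∈ R, (f v u - f u v) + ∑ v ∈ Rᶜ, (f v u - f u v) :=
    fun u => by
      rw [Finset.sum_add_sum_compl, Finset.sum_sub_distrib]
      rfl
  have hinner : ∑ u ∈ R, ∑ v ∈ R, (f v u - f u v) = 0 := by
    simp only [Finset.sum_sub_distrib]
    rw [Finset.sum_comm, sub_self]
  rw [Finset.sum_congr rfl fun u _ => hsplit u, Finset.sum_add_distrib, hinner, zero_add]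

theorem exists_resReach_netFlow_neg (hf : IsPseudoflow N f) {u : V} (hu : 0 < netFlow f u) :
    ∃ w, ResReach N f u w ∧ netFlow f w < 0 := by
  classical
  by_contra! hnonneg
  set R := Finset.univ.filter (ResReach N f u)
  have hpos : 0 < ∑ w ∈ R, netFlow f w :=
    Finset.sum_pos' (fun w hw => hnonneg w (Finset.mem_filter.1 hw).2)
      ⟨u, Finset.mem_filter.2 ⟨Finset.mem_univ _, .refl⟩, hu⟩
  -- no residual edge leaves `R`
  have hnonpos : ∑ w ∈ R, netFlow f w ≤ 0 := by
    rw [sum_netFlow_eq_sum_compl]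
    refine Finset.sum_nonpos fun x hx => Finset.sum_nonpos fun y hy => ?_
    have hxy : ¬ ResEdge N f x y := fun hxy => Finset.mem_compl.1 hy
      (Finset.mem_filter.2 ⟨Finset.mem_univ _, (Finset.mem_filter.1 hx).2.tail hxy⟩)
    simp only [ResEdge, not_or, not_lt] at hxy
    linarith [(hf x y).1]
  exact hpos.not_ge hnonpos

theorem exc_eq_zero_iff {u : V} : exc f u = 0 ↔ netFlow f u ≤ 0 := max_eq_right_iff

theorem deficit_eq_zero_iff {u : V} : deficit f u = 0 ↔ 0 ≤ netFlow f u := by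
  rw [deficit, max_eq_right_iff, neg_nonpos]

theorem SaturatesCut.mem_of_resEdge {S : Finset V} (hsat : SaturatesCut N f S Sᶜ) {x y : V}
    (hx : x ∈ S) (hxy : ResEdge N f x y) : y ∈ S := by
  by_contra hy
  obtain ⟨hfull, hempty⟩ := hsat x hx y (Finset.mem_compl.2 hy)
  rcases hxy with h | h <;> omega

/-- The paper's cut-saturating pseudo-flow without deficits in `S` and excesses in `T = Sᶜ`. -/
structure IsCutSaturating (N : Network V) (f : V → V → ℤ) (S : Finset V) : Prop where
  isPseudoflow : IsPseudoflow N f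
  saturatesCut : SaturatesCut N f S Sᶜ
  netFlow_nonneg : ∀ u ∈ S, u ≠ N.s → 0 ≤ netFlow f u
  netFlow_nonpos : ∀ u ∉ S, u ≠ N.t → netFlow f u ≤ 0

namespace IsCutSaturating

variable {S : Finset V}

theorem exists_push_to_source (hf : IsCutSaturating N f S) {u : V} (huS : u ∈ S)
    (hu : 0 < netFlow f u) :
    ∃ g, IsCutSaturating N g S ∧ netFlow g = netFlow f - Pi.single u 1 + Pi.single N.s 1 := by
  obtain ⟨w, huw, hw⟩ := exists_resReach_netFlow_neg hf.isPseudoflow hu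
  obtain ⟨hwS, hwalk⟩ := huw.restrict (p := (· ∈ S))
    (fun _ _ hx hxy => hf.saturatesCut.mem_of_resEdge hx hxy) huS
  obtain rfl : w = N.s := by_contra fun hws => hw.not_ge (hf.netFlow_nonneg w hwS hws)
  obtain ⟨g, hg, hgf, hnet⟩ := exists_push_of_reflTransGen S hf.isPseudoflow hwalk
  have hnet_apply : ∀ z, netFlow g z =
      netFlow f z - (if z = u then 1 else 0) + (if z = N.s then 1 else 0) := fun z => by
    simp [hnet, Pi.single_apply]
  have hunchanged : ∀ x ∉ S, ∀ y, g x y = f x y ∧ g y x = f y x := fun x hx y =>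
    ⟨by_contra fun h => hx (hgf x y h).1, by_contra fun h => hx (hgf y x h).2⟩
  refine ⟨g, ⟨hg, fun x hx y hy => ?_, fun z hz hzw => ?_, fun z hz hzt => ?_⟩, hnet⟩
  · obtain ⟨hyx, hxy⟩ := hunchanged y (Finset.mem_compl.1 hy) x
    rw [hxy, hyx]
    exact hf.saturatesCut x hx y hy
  · have := hf.netFlow_nonneg z hz hzw
    rw [hnet_apply, if_neg hzw]
    split_ifs with hzu
    · subst hzu; omega
    · omega
  · have := hf.netFlow_nonpos z hz hzt
    rw [hnet_apply, if_neg (ne_of_mem_of_not_mem huS hz).symm,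
      if_neg (ne_of_mem_of_not_mem hwS hz).symm]
    omega

end IsCutSaturating

def Network.reverse (N : Network V) : Network V where
  c u v := N.c v u
  s := N.t
  t := N.s
  st_ne := N.st_ne.symm
  cap_nonneg u v := N.cap_nonneg v u

@[simp]
theorem Network.reverse_reverse (N : Network V) : N.reverse.reverse = N := rfl

theorem netFlow_swap (f : V → V → ℤ) : netFlow (Function.swap f) = -netFlow f := by
  ext u
  simp only [netFlow, inflow, outflow, Function.swap, Pi.neg_apply, neg_sub]

theorem IsCutSaturating.reverse {S : Finset V} (hf : IsCutSaturating N f S) :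
    IsCutSaturating N.reverse (Function.swap f) Sᶜ where
  isPseudoflow u v := hf.isPseudoflow v u
  saturatesCut u hu v hv := hf.saturatesCut v (by simpa using hv) u hu
  netFlow_nonneg u hu hut := by
    simpa [netFlow_swap] using hf.netFlow_nonpos u (Finset.mem_compl.1 hu) hut
  netFlow_nonpos u hu hus := by
    simpa [netFlow_swap] using hf.netFlow_nonneg u (by simpa using hu) hus

theorem IsCutSaturating.exists_pull_from_sink {S : Finset V} (hf : IsCutSaturating N f S)
    {u : V} (huS : u ∉ S) (hu : netFlow f u < 0) :
    ∃ g, IsCutSaturating N g S ∧ netFlow g = netFlow f + Pi.single u 1 - Pi.single N.t 1 := by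
  obtain ⟨g, hg, hnet⟩ := hf.reverse.exists_push_to_source (Finset.mem_compl.2 huS)
    (by simpa [netFlow_swap] using hu)
  refine ⟨Function.swap g, by simpa using hg.reverse, ?_⟩
  rw [netFlow_swap, hnet, netFlow_swap]
  simp only [Network.reverse]
  abel

def imbalance (N : Network V) (f : V → V → ℤ) : ℕ :=
  ∑ u ∈ ({N.s, N.t} : Finset V)ᶜ, (netFlow f u).natAbs

theorem imbalance_lt {u : V} (hus : u ≠ N.s) (hut : u ≠ N.t)
    (hu : (netFlow g u).natAbs < (netFlow f u).natAbs)
    (hother : ∀ z, z ≠ N.s → z ≠ N.t → z ≠ u → netFlow g z = netFlow f z) :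
    imbalance N g < imbalance N f := by
  refine Finset.sum_lt_sum (fun z hz => ?_) ⟨u, by simp [hus, hut], hu⟩
  simp only [Finset.mem_compl, Finset.mem_insert, Finset.mem_singleton, not_or] at hz
  rcases eq_or_ne z u with rfl | hzu
  · exact hu.le
  · rw [hother z hz.1 hz.2 hzu]

namespace IsCutSaturating

variable {S : Finset V}

theorem exists_imbalance_lt (hf : IsCutSaturating N f S) {u : V} (hus : u ≠ N.s)
    (hut : u ≠ N.t) (hu : netFlow f u ≠ 0) :
    ∃ g, IsCutSaturating N g S ∧ imbalance N g < imbalance N f := by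
  by_cases huS : u ∈ S
  · obtain ⟨g, hg, hnet⟩ :=
      hf.exists_push_to_source huS ((hf.netFlow_nonneg u huS hus).lt_of_ne' hu)
    refine ⟨g, hg, imbalance_lt hus hut ?_ fun z hzs _ hzu => ?_⟩
    · have := (hf.netFlow_nonneg u huS hus).lt_of_ne' hu
      simp only [hnet, Pi.add_apply, Pi.sub_apply, Pi.single_eq_same, Pi.single_eq_of_ne hus]
      omega
    · simp [hnet, hzs, hzu]
  · obtain ⟨g, hg, hnet⟩ :=
      hf.exists_pull_from_sink huS ((hf.netFlow_nonpos u huS hut).lt_of_ne hu)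
    refine ⟨g, hg, imbalance_lt hus hut ?_ fun z _ hzt hzu => ?_⟩
    · have := (hf.netFlow_nonpos u huS hut).lt_of_ne hu
      simp only [hnet, Pi.add_apply, Pi.sub_apply, Pi.single_eq_same, Pi.single_eq_of_ne hut]
      omega
    · simp [hnet, hzt, hzu]

theorem exists_isFlow (hf : IsCutSaturating N f S) :
    ∃ g, IsCutSaturating N g S ∧ IsFlow N g := by
  induction h : imbalance N f using Nat.strong_induction_on generalizing f with
  | _ n ih =>
  by_cases hcons : ∀ u, u ≠ N.s → u ≠ N.t → netFlow f u = 0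
  · exact ⟨f, hf, hf.isPseudoflow, hcons⟩
  push Not at hcons
  obtain ⟨u, hus, hut, hu⟩ := hcons
  obtain ⟨g, hg, hlt⟩ := hf.exists_imbalance_lt hus hut hu
  exact ih _ (h ▸ hlt) hg rfl

end IsCutSaturating

theorem IsCutPartition.eq_compl {S T : Finset V} (h : IsCutPartition N S T) : T = Sᶜ :=
  (IsCompl.of_eq (disjoint_iff.1 h.2.1) h.1).compl_eq.symm

theorem IsFlow.flowValue_eq_sum_cut (hg : IsFlow N g) {S : Finset V} (hs : N.s ∈ S)
    (ht : N.t ∉ S) : flowValue N g = ∑ u ∈ S, ∑ v ∈ Sᶜ, (g u v - g v u) := by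
  have hsum : ∑ u ∈ S, netFlow g u = netFlow g N.s :=
    Finset.sum_eq_single_of_mem _ hs fun u hu hus => hg.2 u hus (ne_of_mem_of_not_mem hu ht)
  calc flowValue N g = -netFlow g N.s := by rw [flowValue, netFlow, neg_sub]
    _ = -∑ u ∈ S, ∑ v ∈ Sᶜ, (g v u - g u v) := by rw [← hsum, sum_netFlow_eq_sum_compl]
    _ = ∑ u ∈ S, ∑ v ∈ Sᶜ, (g u v - g v u) := by simp only [← Finset.sum_neg_distrib, neg_sub]

theorem IsFlow.flowValue_le_cutCap (hg : IsFlow N g) {S T : Finset V}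
    (h : IsCutPartition N S T) : flowValue N g ≤ cutCap N S T := by
  obtain rfl := h.eq_compl
  rw [hg.flowValue_eq_sum_cut h.2.2.1 (Finset.mem_compl.1 h.2.2.2), cutCap]
  exact Finset.sum_le_sum fun u _ => Finset.sum_le_sum fun v _ => by
    linarith [(hg.1 u v).2, (hg.1 v u).1]

theorem IsFlow.flowValue_eq_cutCap (hg : IsFlow N g) {S T : Finset V}
    (h : IsCutPartition N S T) (hsat : SaturatesCut N g S T) : flowValue N g = cutCap N S T := by
  obtain rfl := h.eq_compl
  rw [hg.flowValue_eq_sum_cut h.2.2.1 (Finset.mem_compl.1 h.2.2.2), cutCap]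
  exact Finset.sum_congr rfl fun u hu => Finset.sum_congr rfl fun v hv => by
    rw [(hsat u hu v hv).1, (hsat u hu v hv).2, sub_zero]

end Flows

theorem stmt8_general (N : Network V) (f : V → V → ℤ) (S T : Finset V)
    (hpf : IsPseudoflow N f)
    (hpart : IsCutPartition N S T) (hsat : SaturatesCut N f S T)
    (hexc : ∀ u ∈ T, u ≠ N.t → exc f u = 0)
    (hdef : ∀ u ∈ S, u ≠ N.s → deficit f u = 0) :
    (∀ S' T' : Finset V, IsCutPartition N S' T' → cutCap N S T ≤ cutCap N S' T') ∧
    ∃ g : V → V → ℤ, IsFlow N g ∧ SaturatesCut N g S T ∧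
      ∀ g', IsFlow N g' → flowValue N g' ≤ flowValue N g := by
  obtain rfl := hpart.eq_compl
  have hf : IsCutSaturating N f S :=
    ⟨hpf, hsat, fun u hu hus => deficit_eq_zero_iff.1 (hdef u hu hus),
      fun u hu hut => exc_eq_zero_iff.1 (hexc u (Finset.mem_compl.2 hu) hut)⟩
  obtain ⟨g, hg, hgflow⟩ := hf.exists_isFlow
  have hval := hgflow.flowValue_eq_cutCap hpart hg.saturatesCut
  exact ⟨fun S' T' h' => hval ▸ hgflow.flowValue_le_cutCap h', g, hgflow, hg.saturatesCut,
    fun g' hg' => hval ▸ hg'.flowValue_le_cutCap hpart⟩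

/-- if a pseudo-flow saturates `δ(S,T)` with no excess in `T` and no
deficit in `S`, then `δ(S,T)` is a minimum cut, and `f` can be augmented to a
feasible maximum flow saturating the same cut. -/
theorem stmt8 (N : Network V) (f : V → V → ℤ) (S T : Finset V)
    (hpf : IsPseudoflow N f)
    (hconn : ∀ u : V, Relation.ReflTransGen (GEdge N) N.s u ∧
      Relation.ReflTransGen (GEdge N) u N.t)
    (hpart : IsCutPartition N S T) (hsat : SaturatesCut N f S T)
    (hexc : ∀ u ∈ T, u ≠ N.t → exc f u = 0)
    (hdef : ∀ u ∈ S, u ≠ N.s → deficit f u = 0) :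
    (∀ S' T' : Finset V, IsCutPartition N S' T' → cutCap N S T ≤ cutCap N S' T') ∧
    ∃ g : V → V → ℤ, IsFlow N g ∧ SaturatesCut N g S T ∧
      ∀ g', IsFlow N g' → flowValue N g' ≤ flowValue N g :=
  stmt8_general N f S T hpf hpart hsat hexc hdef
end

section
/- Define, for a pre-flow f with heights h and a vertex set T containing all vertices of height less than a threshold, the potential Φ(T) = Σ_{u∈T} exc_f(u)·h(u). A push of δ ≥ 1 units of excess along an admissible residual edge (u,v) with u,v ∈ T and h(u) = h(v)+1 decreases Φ(T) by at least 1. -/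
open Finset

variable {V : Type} [Fintype V] [DecidableEq V]

/-- a push of `δ ≥ 1` units along an admissible residual edge
`(u,v)` with `u, v ∈ T` and `h u = h v + 1` decreases the potential
`Φ(T) = ∑_{w ∈ T} exc(w)·h(w)` by at least 1. -/
theorem stmt12 (N : Network V) (f f' : V → V → ℤ) (h : V → ℕ) (T : Finset V)
    (θ : ℕ) (hTθ : ∀ w : V, h w < θ → w ∈ T)
    (u v : V) (δ : ℤ)
    (hpre : IsPreflow N f) (hvalid : ValidHeights N f h)
    (huT : u ∈ T) (hvT : v ∈ T)
    (hadm : h u = h v + 1) (hres : ResEdge N f u v)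
    (hδ1 : 1 ≤ δ) (hδexc : δ ≤ exc f u)
    (hpf' : IsPseudoflow N f')
    (hchange : ∀ a b : V, ¬((a = u ∧ b = v) ∨ (a = v ∧ b = u)) → f' a b = f a b)
    (hnet : f' u v - f' v u = f u v - f v u + δ) :
    (∑ w ∈ T, exc f' w * (h w : ℤ)) + 1 ≤ ∑ w ∈ T, exc f w * (h w : ℤ) := by

  have huv : u ≠ v := by
    intro h'; rw [h'] at hadm; omega
  -- netFlow changes
  have hinu : inflow f' u = inflow f u + (f' v u - f v u) := by
    have : ∑ x, (f' x u - f x u) = f' v u - f v u := by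
      apply Finset.sum_eq_single_of_mem v (Finset.mem_univ v)
      intro x _ hx
      have := hchange x u (by tauto)
      omega
    simp only [inflow]
    have := Finset.sum_sub_distrib (s := (Finset.univ : Finset V))
      (f := fun x => f' x u) (g := fun x => f x u)
    omega
  have houtu : outflow f' u = outflow f u + (f' u v - f u v) := by
    have : ∑ x, (f' u x - f u x) = f' u v - f u v := by
      apply Finset.sum_eq_single_of_mem v (Finset.mem_univ v)
      intro x _ hx
      have := hchange u x (by tauto)
      omega
    simp only [outflow]
    have := Finset.sum_sub_distrib (s := (Finset.univ : Finset V))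
      (f := fun x => f' u x) (g := fun x => f u x)
    omega
  have hinv : inflow f' v = inflow f v + (f' u v - f u v) := by
    have : ∑ x, (f' x v - f x v) = f' u v - f u v := by
      apply Finset.sum_eq_single_of_mem u (Finset.mem_univ u)
      intro x _ hx
      have := hchange x v (by tauto)
      omega
    simp only [inflow]
    have := Finset.sum_sub_distrib (s := (Finset.univ : Finset V))
      (f := fun x => f' x v) (g := fun x => f x v)
    omega
  have houtv : outflow f' v = outflow f v + (f' v u - f v u) := by
    have : ∑ x, (f' v x - f v x) = f' v u - f v u := by
      apply Finset.sum_eq_single_of_mem u (Finset.mem_univ u)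
      intro x _ hx
      have := hchange v x (by tauto)
      omega
    simp only [outflow]
    have := Finset.sum_sub_distrib (s := (Finset.univ : Finset V))
      (f := fun x => f' v x) (g := fun x => f v x)
    omega
  have hnu : netFlow f' u = netFlow f u - δ := by
    simp only [netFlow]; omega
  have hnv : netFlow f' v = netFlow f v + δ := by
    simp only [netFlow]; omega
  have hnw : ∀ w, w ≠ u → w ≠ v → netFlow f' w = netFlow f w := by
    intro w hwu hwv
    have hin : inflow f' w = inflow f w := by
      apply Finset.sum_congr rfl
      intro x _
      exact hchange x w (by tauto)
    have hout : outflow f' w = outflow f w := by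
      apply Finset.sum_congr rfl
      intro x _
      exact hchange w x (by tauto)
    simp only [netFlow]; omega
  -- exc changes
  have hexcu : exc f' u = exc f u - δ := by
    simp only [exc] at *
    omega
  have hexcv : exc f' v ≤ exc f v + δ := by
    simp only [exc]
    omega
  have hexcw : ∀ w, w ≠ u → w ≠ v → exc f' w = exc f w := by
    intro w hwu hwv
    simp only [exc, hnw w hwu hwv]
  -- pointwise bound
  have hpt : ∀ w ∈ T, exc f' w * (h w : ℤ) ≤ exc f w * (h w : ℤ)
      + ((if w = u then -δ * (h u : ℤ) else 0) + (if w = v then δ * (h v : ℤ) else 0)) := by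
    intro w _
    by_cases hwu : w = u
    · subst hwu
      simp [huv, hexcu]
      ring_nf
      omega
    · by_cases hwv : w = v
      · subst hwv
        simp [hwu]
        have : (0:ℤ) ≤ (h w : ℤ) := Int.natCast_nonneg _
        nlinarith [hexcv]
      · simp [hwu, hwv, hexcw w hwu hwv]
  have hsum := Finset.sum_le_sum hpt
  rw [Finset.sum_add_distrib, Finset.sum_add_distrib,
    Finset.sum_ite_eq' T u (fun _ => -δ * (h u : ℤ)),
    Finset.sum_ite_eq' T v (fun _ => δ * (h v : ℤ)), if_pos huT, if_pos hvT] at hsum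
  have hh : (h u : ℤ) = (h v : ℤ) + 1 := by exact_mod_cast hadm
  nlinarith [hsum]
end

section
/- Suppose f is a pseudo-flow on G saturating cut δ(S₀,T₀) with s ∈ S₀, t ∈ T₀, and f″ is a pseudo-flow supported only on residual edges between vertices of T₀ (i.e., f+f″ respects capacities and f″ is zero on every edge with an endpoint in S₀). If within T₀ the updated flow f+f″ saturates a cut δ(T₀′, T₀″) of the induced residual structure with t ∈ T₀″, then f+f″ saturates the cut δ(S₀ ∪ T₀′, T₀″) in G. -/
open Finset

variable {V : Type} [Fintype V] [DecidableEq V]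

/-- if `f` saturates `δ(S₀,T₀)`, `f''` is supported within `T₀`,
and `f + f''` saturates the cut `δ(T₀',T₀'')` of `T₀` with `t ∈ T₀''`, then
`f + f''` saturates the cut `δ(S₀ ∪ T₀', T₀'')` of `G`. -/
theorem stmt15 (N : Network V) (f f'' : V → V → ℤ)
    (S₀ T₀ T₀' T₀'' : Finset V)
    (hpf : IsPseudoflow N f)
    (hpart : IsCutPartition N S₀ T₀)
    (hsat : SaturatesCut N f S₀ T₀)
    (hsupp : ∀ u v : V, (u ∈ S₀ ∨ v ∈ S₀) → f'' u v = 0)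
    (hpf' : IsPseudoflow N (fun u v => f u v + f'' u v))
    (hTU : T₀' ∪ T₀'' = T₀) (hTD : Disjoint T₀' T₀'') (ht : N.t ∈ T₀'')
    (hsat2 : ∀ u ∈ T₀', ∀ v ∈ T₀'',
      f u v + f'' u v = N.c u v ∧ f v u + f'' v u = 0) :
    IsCutPartition N (S₀ ∪ T₀') T₀'' ∧
    SaturatesCut N (fun u v => f u v + f'' u v) (S₀ ∪ T₀') T₀'' := by
  constructor
  · obtain ⟨hU, hD, hs, htT⟩ := hpart
    refine ⟨?_, ?_, Finset.mem_union_left _ hs, ht⟩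
    · rw [Finset.union_assoc, hTU, hU]
    · rw [Finset.disjoint_union_left]
      exact ⟨hD.mono_right (hTU ▸ Finset.subset_union_right), hTD⟩
  · intro u hu v hv
    have hvT : v ∈ T₀ := hTU ▸ Finset.mem_union_right _ hv
    rcases Finset.mem_union.mp hu with h | h
    · have h1 := hsat u h v hvT
      have h2 := hsupp u v (Or.inl h)
      have h3 := hsupp v u (Or.inr h)
      refine ⟨?_, ?_⟩ <;> show _ + _ = _ <;> omega
    · exact hsat2 u h v hv
end

section
/- In the auxiliary network G′ built from G_f[T₀] by adding a super-source s* with edges (s*,u) of capacity exc_f(u) for each excess node u ∈ T₀, a super-sink t* with edges (v,t*) of capacity def_f(v) for each deficit node v ∈ T₀, and an edge (t,t*) of capacity η+1 where η bounds total excess: if f′ is a maximum s*–t* flow in G′ with associated minimum cut δ(T₀′,T₀″), then t ∈ T₀″ and every excess node u whose super-source edge (s*,u) is unsaturated by f′ lies in T₀′. -/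
open Finset

variable {V : Type} [Fintype V] [DecidableEq V]

/-- Capacities of the auxiliary network `G'` on `V ⊕ Bool` built from the residual
graph induced on `T₀`: `Sum.inr false` is the super-source `s*`, `Sum.inr true`
the super-sink `t*`; `s*` has edges of capacity `exc f u` to excess nodes of `T₀`
(other than `t`), deficit nodes of `T₀` have edges of capacity `def f v` to `t*`,
and `t` has an edge of capacity `η + 1` to `t*`. -/
def auxC (N : Network V) (f : V → V → ℤ) (T₀ : Finset V) (η : ℤ) :
    V ⊕ Bool → V ⊕ Bool → ℤ := fun x y =>
  match x, y with
  | Sum.inr false, Sum.inl u => if u ∈ T₀ ∧ u ≠ N.t then exc f u else 0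
  | Sum.inl v, Sum.inr true =>
      if v = N.t then η + 1 else if v ∈ T₀ then deficit f v else 0
  | Sum.inl u, Sum.inl v =>
      if u ∈ T₀ ∧ v ∈ T₀ then (N.c u v - f u v) + f v u else 0
  | _, _ => 0

/-- for a maximum `s*`–`t*` flow `f'` of the auxiliary network with
associated minimum (saturated) cut `δ(T₀',T₀'')`, we have `t ∈ T₀''`, and every
excess node of `T₀` whose super-source edge is unsaturated lies in `T₀'`. -/
theorem stmt17 (N : Network V) (f : V → V → ℤ) (T₀ : Finset V) (η : ℤ)
    (hpf : IsPseudoflow N f) (htT : N.t ∈ T₀) (hsT : N.s ∉ T₀)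
    (hsat : SaturatesCut N f T₀ᶜ T₀)
    (hη : (∑ u ∈ T₀, exc f u) ≤ η) (hη0 : 0 ≤ η)
    (f' : V ⊕ Bool → V ⊕ Bool → ℤ)
    (hfeas : ∀ x y, 0 ≤ f' x y ∧ f' x y ≤ auxC N f T₀ η x y)
    (hcons : ∀ x, x ≠ Sum.inr false → x ≠ Sum.inr true →
      (∑ y, f' y x) = ∑ y, f' x y)
    (hmax : ∀ g : V ⊕ Bool → V ⊕ Bool → ℤ,
      (∀ x y, 0 ≤ g x y ∧ g x y ≤ auxC N f T₀ η x y) →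
      (∀ x, x ≠ Sum.inr false → x ≠ Sum.inr true → (∑ y, g y x) = ∑ y, g x y) →
      (∑ y, g (Sum.inr false) y) - (∑ y, g y (Sum.inr false)) ≤
        (∑ y, f' (Sum.inr false) y) - (∑ y, f' y (Sum.inr false)))
    (T₀' T₀'' : Finset (V ⊕ Bool))
    (hcutU : T₀' ∪ T₀'' = Finset.univ) (hcutD : Disjoint T₀' T₀'')
    (hs' : Sum.inr false ∈ T₀') (ht' : Sum.inr true ∈ T₀'')
    (hcutsat : ∀ x ∈ T₀', ∀ y ∈ T₀'',
      f' x y = auxC N f T₀ η x y ∧ f' y x = 0) :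
    Sum.inl N.t ∈ T₀'' ∧
    ∀ u ∈ T₀, u ≠ N.t → 0 < exc f u →
      f' (Sum.inr false) (Sum.inl u) < auxC N f T₀ η (Sum.inr false) (Sum.inl u) →
      Sum.inl u ∈ T₀' := by
  have hmem : ∀ x : V ⊕ Bool, x ∉ T₀'' → x ∈ T₀' := by
    intro x hx
    have : x ∈ T₀' ∪ T₀'' := by rw [hcutU]; exact Finset.mem_univ x
    rcases Finset.mem_union.1 this with h | h
    · exact h
    · exact absurd h hx
  constructor
  · by_contra ht''
    have htmem : Sum.inl N.t ∈ T₀' := hmem _ ht''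
    have hval : f' (Sum.inl N.t) (Sum.inr true) = η + 1 := by
      have := (hcutsat _ htmem _ ht').1
      simpa [auxC] using this
    -- flow out of t* is zero
    have hzero_out : ∀ y, f' (Sum.inr true) y = 0 := fun y =>
      le_antisymm (by simpa [auxC] using (hfeas (Sum.inr true) y).2) (hfeas _ y).1
    -- global balance
    have hglobal : ∑ x : V ⊕ Bool, ((∑ y, f' y x) - (∑ y, f' x y)) = 0 := by
      rw [Finset.sum_sub_distrib, sub_eq_zero]
      exact Finset.sum_comm
    have hpair : ((∑ y, f' y (Sum.inr false)) - (∑ y, f' (Sum.inr false) y)) +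
        ((∑ y, f' y (Sum.inr true)) - (∑ y, f' (Sum.inr true) y)) = 0 := by
      have hsub : ({Sum.inr false, Sum.inr true} : Finset (V ⊕ Bool)) ⊆ Finset.univ :=
        Finset.subset_univ _
      have heq : ∑ x ∈ ({Sum.inr false, Sum.inr true} : Finset (V ⊕ Bool)),
          ((∑ y, f' y x) - (∑ y, f' x y)) =
          ∑ x : V ⊕ Bool, ((∑ y, f' y x) - (∑ y, f' x y)) :=
        Finset.sum_subset hsub (fun x _ hx => by
          have h1 : x ≠ Sum.inr false := fun h => hx (by simp [h])
          have h2 : x ≠ Sum.inr true := fun h => hx (by simp [h])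
          rw [hcons x h1 h2, sub_self])
      rw [Finset.sum_pair (by simp)] at heq
      rw [heq, hglobal]
    have h1 : f' (Sum.inl N.t) (Sum.inr true) ≤ ∑ y, f' y (Sum.inr true) :=
      Finset.single_le_sum (fun y _ => (hfeas y _).1) (Finset.mem_univ _)
    have h2 : (∑ y, f' (Sum.inr true) y) = 0 := by
      simp [hzero_out]
    have h3 : (∑ y, f' y (Sum.inr true)) =
        (∑ y, f' (Sum.inr false) y) - (∑ y, f' y (Sum.inr false)) := by linarith
    have h4 : (∑ y, f' (Sum.inr false) y) ≤ ∑ y, auxC N f T₀ η (Sum.inr false) y :=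
      Finset.sum_le_sum (fun y _ => (hfeas _ y).2)
    have h5 : (∑ y, auxC N f T₀ η (Sum.inr false) y) ≤ η := by
      rw [Fintype.sum_sum_type]
      have hb : (∑ b : Bool, auxC N f T₀ η (Sum.inr false) (Sum.inr b)) = 0 := by
        simp [auxC]
      rw [hb, add_zero]
      calc (∑ u : V, auxC N f T₀ η (Sum.inr false) (Sum.inl u))
          ≤ ∑ u : V, (if u ∈ T₀ then exc f u else 0) := by
            apply Finset.sum_le_sum
            intro u _
            simp only [auxC]
            split_ifs with hc hd hd
            · exact le_refl _
            · exact absurd hc.1 hd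
            · exact le_max_right _ _
            · exact le_refl _
        _ = ∑ u ∈ T₀, exc f u := by rw [Finset.sum_ite_mem]; simp
        _ ≤ η := hη
    have h6 : 0 ≤ ∑ y, f' y (Sum.inr false) :=
      Finset.sum_nonneg (fun y _ => (hfeas y _).1)
    linarith
  · intro u hu hut hexc hlt
    by_contra hu'
    have hu'' : Sum.inl u ∈ T₀'' := by
      by_contra h
      exact hu' (hmem _ h)
    exact absurd ((hcutsat _ hs' _ hu'').1) (ne_of_lt hlt)
end
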